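/- Let n₁, n₂ ≥ 1 be integers, x₁, x₂ ∈ ℤ, and a₁, b₁, a₂, b₂ ∈ ℝ. For 1 ≤ k ≤ n₂ set Ψ^{(1)}_{n₁−k}(x₁) = (1/(2πi)) ∮_{|w|=2} (w(w−1))^{n₁−k} w^{−(x₁+2n₁+1)} e^{a₁w + b₁/w} dw and Φ^{(2)}_{n₂−k}(x₂) = (1/(2πi)) ∮_{|z−1|=r} (2z−1) z^{x₂+2n₂} (z(z−1))^{−(n₂−k+1)} e^{−a₂z − b₂/z} dz with 0 < r < 1/4. Then ∑_{k=1}^{n₂} Ψ^{(1)}_{n₁−k}(x₁) Φ^{(2)}_{n₂−k}(x₂) = (1/(2πi)²) ∮_{|z−1|=r} dz ∮_{|w|=2} dw e^{a₁w + b₁/w − a₂z − b₂/z} (w(w−1))^{n₁} (2z−1) z^{x₂+2n₂} / ( (z(z−1))^{n₂} w^{x₁+2n₁+1} (w−z)(w+z−1) ). -/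

import Mathlib

/-!
Write `A = w(w-1)` and `B = z(z-1)`. Up to factors independent of `k`, the `k`-th summand of the
product of the two contour integrals is `∮∮ A^(n₁-k) B^(-(n₂-k+1))`, and the finite geometric sum
over `k` equals `(A^n₁ B^(-n₂) - A^(n₁-n₂)) / (A - B)` with `A - B = (w-z)(w+z-1)`. The first term
gives the double contour integral of the theorem. The second has no pole at `z = 1`, and for
`|w| = 2` it is holomorphic in `z` on the closed disc `|z-1| ≤ r`, so its `z`-integral vanishes
by Cauchy's theorem. Interchanging the two integrals (Fubini on the torus) finishes the proof.
-/

open Complex MeasureTheory Metric Set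
open scoped Real

theorem sub_mul_sum_Icc_zpow_mul_zpow {K : Type*} [Field K] {A B : K} (hA : A ≠ 0) (hB : B ≠ 0)
    (m : ℤ) (n : ℕ) :
    (A - B) * ∑ k ∈ Finset.Icc 1 n, A ^ (m - k) * B ^ (-((n : ℤ) - k + 1)) =
      A ^ m * B ^ (-(n : ℤ)) - A ^ (m - n) := by
  induction n with
  | zero => simp
  | succ n ih =>
    have hterm : ∀ k : ℕ, A ^ (m - k) * B ^ (-(((n + 1 : ℕ) : ℤ) - k + 1)) =
        A ^ (m - k) * B ^ (-((n : ℤ) - k + 1)) * B⁻¹ := by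
      intro k
      rw [mul_assoc, ← zpow_neg_one, ← zpow_add₀ hB]
      push_cast
      ring_nf
    rw [Finset.sum_Icc_succ_top (by omega), Finset.sum_congr rfl fun k _ => hterm k,
      ← Finset.sum_mul, mul_add, ← mul_assoc, ih]
    push_cast
    simp only [sub_self, zero_add, zpow_sub₀ hA, zpow_neg, zpow_add₀ hA, zpow_add₀ hB,
      zpow_natCast, zpow_one]
    field_simp
    ring

theorem sum_circleIntegral_mul_circleIntegral {ι : Type*} {s : Finset ι} {f g : ι → ℂ → ℂ}
    {c₁ c₂ : ℂ} {R₁ R₂ : ℝ} (hf : ∀ i ∈ s, CircleIntegrable (f i) c₁ R₁)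
    (hg : ∀ i ∈ s, CircleIntegrable (g i) c₂ R₂) :
    ∑ i ∈ s, (∮ w in C(c₁, R₁), f i w) * (∮ z in C(c₂, R₂), g i z) =
      ∮ w in C(c₁, R₁), ∮ z in C(c₂, R₂), ∑ i ∈ s, f i w * g i z := by
  have hinner : ∀ w, (∮ z in C(c₂, R₂), ∑ i ∈ s, f i w * g i z) =
      ∑ i ∈ s, f i w * ∮ z in C(c₂, R₂), g i z := fun w => by
    rw [circleIntegral.integral_fun_sum fun i hi =>
      (hg i hi).fun_continuousOn_mul continuousOn_const]
    simp only [circleIntegral.integral_const_mul]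
  simp only [hinner]
  rw [circleIntegral.integral_fun_sum fun i hi =>
    (hf i hi).fun_mul_continuousOn continuousOn_const]
  simp only [mul_comm _ (∮ z in C(c₂, R₂), g _ z), circleIntegral.integral_const_mul]

theorem circleIntegral_comm {E : Type*} [NormedAddCommGroup E] [NormedSpace ℂ E]
    {f : ℂ → ℂ → E} {c₁ c₂ : ℂ} {R₁ R₂ : ℝ}
    (hf : ContinuousOn (Function.uncurry f) (sphere c₁ |R₁| ×ˢ sphere c₂ |R₂|)) :
    (∮ z in C(c₁, R₁), ∮ w in C(c₂, R₂), f z w) = ∮ w in C(c₂, R₂), ∮ z in C(c₁, R₁), f z w := by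
  have hcont : Continuous fun θ : ℝ × ℝ =>
      deriv (circleMap c₁ R₁) θ.1 • deriv (circleMap c₂ R₂) θ.2 •
        f (circleMap c₁ R₁ θ.1) (circleMap c₂ R₂ θ.2) := by
    have hf' : Continuous fun θ : ℝ × ℝ => f (circleMap c₁ R₁ θ.1) (circleMap c₂ R₂ θ.2) :=
      hf.comp_continuous (f := fun θ : ℝ × ℝ => (circleMap c₁ R₁ θ.1, circleMap c₂ R₂ θ.2))
        (by fun_prop) fun θ =>
        ⟨circleMap_mem_sphere' c₁ R₁ θ.1, circleMap_mem_sphere' c₂ R₂ θ.2⟩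
    simp only [deriv_circleMap]
    exact Continuous.smul (by fun_prop) (Continuous.smul (by fun_prop) hf')
  simp only [circleIntegral_def_Icc, ← integral_smul]
  rw [integral_integral_swap]
  · simp only [smul_comm (deriv (circleMap c₁ R₁) _)]
  · rw [Measure.prod_restrict]
    exact hcont.continuousOn.integrableOn_compact (isCompact_Icc.prod isCompact_Icc)

theorem ne_zero_and_sub_one_ne_zero_of_mem_sphere_two {w : ℂ} (hw : w ∈ sphere (0 : ℂ) 2) :
    w ≠ 0 ∧ w - 1 ≠ 0 := by
  rw [mem_sphere_zero_iff_norm] at hw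
  constructor <;> intro h
  · rw [h, norm_zero] at hw
    norm_num at hw
  · rw [sub_eq_zero.1 h, norm_one] at hw
    norm_num at hw

theorem ne_zero_of_mem_closedBall_one {r : ℝ} (hr : r < 1) {z : ℂ}
    (hz : z ∈ closedBall (1 : ℂ) r) : z ≠ 0 := by
  rintro rfl
  rw [mem_closedBall, dist_zero_left, norm_one] at hz
  linarith

theorem sub_ne_zero_and_add_sub_one_ne_zero_of_mem_closedBall_one {r : ℝ} (hr : r < 1)
    {z w : ℂ} (hz : z ∈ closedBall (1 : ℂ) r) (hw : w ∈ sphere (0 : ℂ) 2) :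
    w - z ≠ 0 ∧ w + z - 1 ≠ 0 := by
  rw [mem_closedBall, dist_eq_norm] at hz
  rw [mem_sphere_zero_iff_norm] at hw
  constructor <;> intro h
  · rw [sub_eq_zero.1 h] at hw
    linarith [norm_le_norm_sub_add z 1, norm_one (α := ℂ)]
  · rw [show w = -(z - 1) by linear_combination h, norm_neg] at hw
    linarith

section PushASEP

variable (n₁ n₂ : ℕ) (x₁ x₂ : ℤ) (a₁ b₁ a₂ b₂ : ℝ)

-- The integrands of `Ψ^{(1)}_{n₁-k}(x₁)` and `Φ^{(2)}_{n₂-k}(x₂)`.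
noncomputable def psiIntegrand (k : ℕ) (w : ℂ) : ℂ :=
  (w * (w - 1)) ^ ((n₁ : ℤ) - k) * w ^ (-(x₁ + 2 * (n₁ : ℤ) + 1)) *
    exp ((a₁ : ℂ) * w + (b₁ : ℂ) / w)

noncomputable def phiIntegrand (k : ℕ) (z : ℂ) : ℂ :=
  (2 * z - 1) * z ^ (x₂ + 2 * (n₂ : ℤ)) * (z * (z - 1)) ^ (-((n₂ : ℤ) - k + 1)) *
    exp (-((a₂ : ℂ) * z) - (b₂ : ℂ) / z)

noncomputable def kernelIntegrand (z w : ℂ) : ℂ :=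
  exp ((a₁ : ℂ) * w + (b₁ : ℂ) / w - (a₂ : ℂ) * z - (b₂ : ℂ) / z) *
    (w * (w - 1)) ^ n₁ * (2 * z - 1) * z ^ (x₂ + 2 * (n₂ : ℤ)) /
    ((z * (z - 1)) ^ n₂ * w ^ (x₁ + 2 * (n₁ : ℤ) + 1) * (w - z) * (w + z - 1))

noncomputable def kernelCorrection (z w : ℂ) : ℂ :=
  exp ((a₁ : ℂ) * w + (b₁ : ℂ) / w - (a₂ : ℂ) * z - (b₂ : ℂ) / z) *
    (w * (w - 1)) ^ ((n₁ : ℤ) - n₂) * (2 * z - 1) * z ^ (x₂ + 2 * (n₂ : ℤ)) /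
    (w ^ (x₁ + 2 * (n₁ : ℤ) + 1) * (w - z) * (w + z - 1))

variable {n₁ n₂ x₁ x₂ a₁ b₁ a₂ b₂} {r : ℝ}

theorem sum_psiIntegrand_mul_phiIntegrand {z w : ℂ} (hz₀ : z ≠ 0) (hz₁ : z - 1 ≠ 0)
    (hw₀ : w ≠ 0) (hw₁ : w - 1 ≠ 0) (hwz : w - z ≠ 0) (hwz' : w + z - 1 ≠ 0) :
    ∑ k ∈ Finset.Icc 1 n₂, psiIntegrand n₁ x₁ a₁ b₁ k w * phiIntegrand n₂ x₂ a₂ b₂ k z =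
      kernelIntegrand n₁ n₂ x₁ x₂ a₁ b₁ a₂ b₂ z w -
        kernelCorrection n₁ n₂ x₁ x₂ a₁ b₁ a₂ b₂ z w := by
  have hgeom := sub_mul_sum_Icc_zpow_mul_zpow (mul_ne_zero hw₀ hw₁) (mul_ne_zero hz₀ hz₁) n₁ n₂
  rw [show w * (w - 1) - z * (z - 1) = (w - z) * (w + z - 1) by ring] at hgeom
  have hsum := (eq_div_iff (mul_ne_zero hwz hwz')).2 ((mul_comm _ _).trans hgeom)
  have hterm : ∀ k ∈ Finset.Icc 1 n₂,
      psiIntegrand n₁ x₁ a₁ b₁ k w * phiIntegrand n₂ x₂ a₂ b₂ k z =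
        (w ^ (-(x₁ + 2 * (n₁ : ℤ) + 1)) * exp ((a₁ : ℂ) * w + (b₁ : ℂ) / w) * (2 * z - 1) *
          z ^ (x₂ + 2 * (n₂ : ℤ)) * exp (-((a₂ : ℂ) * z) - (b₂ : ℂ) / z)) *
        ((w * (w - 1)) ^ ((n₁ : ℤ) - k) * (z * (z - 1)) ^ (-((n₂ : ℤ) - k + 1))) := by
    intro k _
    simp only [psiIntegrand, phiIntegrand]
    ring
  have hexp : exp ((a₁ : ℂ) * w + (b₁ : ℂ) / w - (a₂ : ℂ) * z - (b₂ : ℂ) / z) =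
      exp ((a₁ : ℂ) * w + (b₁ : ℂ) / w) * exp (-((a₂ : ℂ) * z) - (b₂ : ℂ) / z) := by
    rw [← exp_add]
    ring_nf
  rw [Finset.sum_congr rfl hterm, ← Finset.mul_sum, hsum, kernelIntegrand, kernelCorrection, hexp]
  simp only [zpow_neg, zpow_natCast]
  field_simp

theorem circleIntegrable_psiIntegrand (k : ℕ) :
    CircleIntegrable (psiIntegrand n₁ x₁ a₁ b₁ k) 0 2 := by
  refine ContinuousOn.circleIntegrable zero_le_two fun w hw => ContinuousAt.continuousWithinAt ?_
  obtain ⟨hw₀, hw₁⟩ := ne_zero_and_sub_one_ne_zero_of_mem_sphere_two hw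
  unfold psiIntegrand
  fun_prop (disch := first | exact Or.inl hw₀ | exact Or.inl (mul_ne_zero hw₀ hw₁) | exact hw₀)

theorem circleIntegrable_phiIntegrand (hr₀ : 0 < r) (hr₁ : r < 1) (k : ℕ) :
    CircleIntegrable (phiIntegrand n₂ x₂ a₂ b₂ k) 1 r := by
  refine ContinuousOn.circleIntegrable hr₀.le fun z hz => ContinuousAt.continuousWithinAt ?_
  have hz₀ := ne_zero_of_mem_closedBall_one hr₁ (sphere_subset_closedBall hz)
  have hz₁ := sub_ne_zero.2 (ne_of_mem_sphere hz hr₀.ne')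
  unfold phiIntegrand
  fun_prop (disch := first | exact Or.inl hz₀ | exact Or.inl (mul_ne_zero hz₀ hz₁) | exact hz₀)

theorem continuousOn_kernelIntegrand (hr₀ : 0 < r) (hr₁ : r < 1) :
    ContinuousOn (Function.uncurry (kernelIntegrand n₁ n₂ x₁ x₂ a₁ b₁ a₂ b₂))
      (sphere (1 : ℂ) r ×ˢ sphere (0 : ℂ) 2) := by
  rintro ⟨z, w⟩ ⟨hz, hw⟩
  refine ContinuousAt.continuousWithinAt ?_
  have hz₀ := ne_zero_of_mem_closedBall_one hr₁ (sphere_subset_closedBall hz)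
  have hz₁ := sub_ne_zero.2 (ne_of_mem_sphere hz hr₀.ne')
  obtain ⟨hw₀, -⟩ := ne_zero_and_sub_one_ne_zero_of_mem_sphere_two hw
  obtain ⟨hwz, hwz'⟩ :=
    sub_ne_zero_and_add_sub_one_ne_zero_of_mem_closedBall_one hr₁ (sphere_subset_closedBall hz) hw
  unfold kernelIntegrand Function.uncurry
  fun_prop (disch :=
    (repeat' first
      | apply mul_ne_zero
      | apply pow_ne_zero
      | apply zpow_ne_zero
      | apply Or.inl) <;> assumption)

theorem differentiableOn_kernelCorrection (hr₁ : r < 1) {w : ℂ} (hw : w ∈ sphere (0 : ℂ) 2) :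
    DifferentiableOn ℂ (kernelCorrection n₁ n₂ x₁ x₂ a₁ b₁ a₂ b₂ · w) (closedBall 1 r) := by
  intro z hz
  refine DifferentiableAt.differentiableWithinAt ?_
  have hz₀ := ne_zero_of_mem_closedBall_one hr₁ hz
  obtain ⟨hw₀, -⟩ := ne_zero_and_sub_one_ne_zero_of_mem_sphere_two hw
  obtain ⟨hwz, hwz'⟩ := sub_ne_zero_and_add_sub_one_ne_zero_of_mem_closedBall_one hr₁ hz hw
  unfold kernelCorrection
  fun_prop (disch :=
    (repeat' first
      | apply mul_ne_zero
      | apply zpow_ne_zero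
      | apply Or.inl) <;> assumption)

theorem circleIntegral_sum_psiIntegrand_mul_phiIntegrand (hr₀ : 0 < r) (hr₁ : r < 1)
    {w : ℂ} (hw : w ∈ sphere (0 : ℂ) 2) :
    (∮ z in C(1, r), ∑ k ∈ Finset.Icc 1 n₂,
        psiIntegrand n₁ x₁ a₁ b₁ k w * phiIntegrand n₂ x₂ a₂ b₂ k z) =
      ∮ z in C(1, r), kernelIntegrand n₁ n₂ x₁ x₂ a₁ b₁ a₂ b₂ z w := by
  have hcorr : DifferentiableOn ℂ (kernelCorrection n₁ n₂ x₁ x₂ a₁ b₁ a₂ b₂ · w)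
      (closedBall 1 r) :=
    differentiableOn_kernelCorrection hr₁ hw
  have hkernel : CircleIntegrable (kernelIntegrand n₁ n₂ x₁ x₂ a₁ b₁ a₂ b₂ · w) 1 r :=
    ((continuousOn_kernelIntegrand hr₀ hr₁).comp (Continuous.prodMk_left w).continuousOn
      fun z hz => ⟨hz, hw⟩).circleIntegrable hr₀.le
  have hsum : EqOn (fun z => ∑ k ∈ Finset.Icc 1 n₂,
      psiIntegrand n₁ x₁ a₁ b₁ k w * phiIntegrand n₂ x₂ a₂ b₂ k z)
      (fun z => kernelIntegrand n₁ n₂ x₁ x₂ a₁ b₁ a₂ b₂ z w -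
        kernelCorrection n₁ n₂ x₁ x₂ a₁ b₁ a₂ b₂ z w) (sphere 1 r) := by
    intro z hz
    have hz' := sphere_subset_closedBall hz
    obtain ⟨hw₀, hw₁⟩ := ne_zero_and_sub_one_ne_zero_of_mem_sphere_two hw
    obtain ⟨hwz, hwz'⟩ := sub_ne_zero_and_add_sub_one_ne_zero_of_mem_closedBall_one hr₁ hz' hw
    exact sum_psiIntegrand_mul_phiIntegrand (ne_zero_of_mem_closedBall_one hr₁ hz')
      (sub_ne_zero.2 (ne_of_mem_sphere hz hr₀.ne')) hw₀ hw₁ hwz hwz'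
  rw [circleIntegral.integral_congr hr₀.le hsum, circleIntegral.integral_sub hkernel
      ((hcorr.continuousOn.mono sphere_subset_closedBall).circleIntegrable hr₀.le),
    (hcorr.diffContOnCl_ball subset_rfl).circleIntegral_eq_zero hr₀.le, sub_zero]

end PushASEP

theorem stmt11_general (n₁ n₂ : ℕ) (x₁ x₂ : ℤ)
    (a₁ b₁ a₂ b₂ : ℝ) (r : ℝ) (hr0 : 0 < r) (hr1 : r < 1/4) :
    ∑ k ∈ Finset.Icc 1 n₂,
      ((2 * (Real.pi : ℂ) * Complex.I)⁻¹ *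
        ∮ w in C(0, 2), (w * (w - 1)) ^ ((n₁ : ℤ) - k) *
          w ^ (-(x₁ + 2 * (n₁ : ℤ) + 1)) *
          Complex.exp ((a₁ : ℂ) * w + (b₁ : ℂ) / w)) *
      ((2 * (Real.pi : ℂ) * Complex.I)⁻¹ *
        ∮ z in C(1, r), (2 * z - 1) * z ^ (x₂ + 2 * (n₂ : ℤ)) *
          (z * (z - 1)) ^ (-((n₂ : ℤ) - k + 1)) *
          Complex.exp (-((a₂ : ℂ) * z) - (b₂ : ℂ) / z))
    = (2 * (Real.pi : ℂ) * Complex.I)⁻¹ *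
        ∮ z in C(1, r), (2 * (Real.pi : ℂ) * Complex.I)⁻¹ *
          ∮ w in C(0, 2),
            Complex.exp ((a₁ : ℂ) * w + (b₁ : ℂ) / w - (a₂ : ℂ) * z - (b₂ : ℂ) / z) *
              (w * (w - 1)) ^ n₁ * (2 * z - 1) * z ^ (x₂ + 2 * (n₂ : ℤ)) /
              ((z * (z - 1)) ^ n₂ * w ^ (x₁ + 2 * (n₁ : ℤ) + 1) *
                (w - z) * (w + z - 1)) := by
  set c : ℂ := (2 * (π : ℂ) * I)⁻¹
  have hr : r < 1 := by linarith
  have hkernel : ContinuousOn (Function.uncurry (kernelIntegrand n₁ n₂ x₁ x₂ a₁ b₁ a₂ b₂))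
      (sphere 1 |r| ×ˢ sphere 0 |2|) := by
    rw [abs_of_pos hr0, abs_two]
    exact continuousOn_kernelIntegrand hr0 hr
  calc _ = c * c * ∑ k ∈ Finset.Icc 1 n₂, (∮ w in C(0, 2), psiIntegrand n₁ x₁ a₁ b₁ k w) *
          ∮ z in C(1, r), phiIntegrand n₂ x₂ a₂ b₂ k z := by
        rw [Finset.mul_sum]
        exact Finset.sum_congr rfl fun k _ => mul_mul_mul_comm _ _ _ _
    _ = c * c * ∮ w in C(0, 2), ∮ z in C(1, r), ∑ k ∈ Finset.Icc 1 n₂,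
          psiIntegrand n₁ x₁ a₁ b₁ k w * phiIntegrand n₂ x₂ a₂ b₂ k z := by
        rw [sum_circleIntegral_mul_circleIntegral (fun k _ => circleIntegrable_psiIntegrand k)
          (fun k _ => circleIntegrable_phiIntegrand hr0 hr k)]
    _ = c * c * ∮ w in C(0, 2), ∮ z in C(1, r), kernelIntegrand n₁ n₂ x₁ x₂ a₁ b₁ a₂ b₂ z w := by
        rw [circleIntegral.integral_congr zero_le_two fun w hw =>
          circleIntegral_sum_psiIntegrand_mul_phiIntegrand hr0 hr hw]
    _ = c * c * ∮ z in C(1, r), ∮ w in C(0, 2), kernelIntegrand n₁ n₂ x₁ x₂ a₁ b₁ a₂ b₂ z w := by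
        rw [circleIntegral_comm hkernel]
    _ = _ := by
        simp only [circleIntegral.integral_const_mul]
        rw [mul_assoc]
        rfl

/-- summation identity for the main part of the finite-time
flat-initial-condition PushASEP kernel:
`∑_{k=1}^{n₂} Ψ^{(1)}_{n₁−k}(x₁) Φ^{(2)}_{n₂−k}(x₂)` equals the double contour
integral with the factor `1/((w−z)(w+z−1))`. -/
theorem stmt11 (n₁ n₂ : ℕ) (hn₁ : 1 ≤ n₁) (hn₂ : 1 ≤ n₂) (x₁ x₂ : ℤ)
    (a₁ b₁ a₂ b₂ : ℝ) (r : ℝ) (hr0 : 0 < r) (hr1 : r < 1/4) :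
    ∑ k ∈ Finset.Icc 1 n₂,
      ((2 * (Real.pi : ℂ) * Complex.I)⁻¹ *
        ∮ w in C(0, 2), (w * (w - 1)) ^ ((n₁ : ℤ) - k) *
          w ^ (-(x₁ + 2 * (n₁ : ℤ) + 1)) *
          Complex.exp ((a₁ : ℂ) * w + (b₁ : ℂ) / w)) *
      ((2 * (Real.pi : ℂ) * Complex.I)⁻¹ *
        ∮ z in C(1, r), (2 * z - 1) * z ^ (x₂ + 2 * (n₂ : ℤ)) *
          (z * (z - 1)) ^ (-((n₂ : ℤ) - k + 1)) *
          Complex.exp (-((a₂ : ℂ) * z) - (b₂ : ℂ) / z))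
    = (2 * (Real.pi : ℂ) * Complex.I)⁻¹ *
        ∮ z in C(1, r), (2 * (Real.pi : ℂ) * Complex.I)⁻¹ *
          ∮ w in C(0, 2),
            Complex.exp ((a₁ : ℂ) * w + (b₁ : ℂ) / w - (a₂ : ℂ) * z - (b₂ : ℂ) / z) *
              (w * (w - 1)) ^ n₁ * (2 * z - 1) * z ^ (x₂ + 2 * (n₂ : ℤ)) /
              ((z * (z - 1)) ^ n₂ * w ^ (x₁ + 2 * (n₁ : ℤ) + 1) *
                (w - z) * (w + z - 1)) :=
  stmt11_general n₁ n₂ x₁ x₂ a₁ b₁ a₂ b₂ r hr0 hr1
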